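/- arXiv:2108.11067 — 2 statements merged into one kernel-verified Lean document; each statement's English description precedes it below -/
import Mathlib

section
/- (Generalized Fourier slice theorem) Let f : ℝⁿ → ℂ be an integrable function, let σ be a d-dimensional linear subspace of ℝⁿ, and let ξ ∈ σ⊥. Then the (n-d)-dimensional Fourier transform over σ⊥ of the function x'' ↦ R_d f(σ, x'') := ∫_σ f(x' + x'') dx' evaluated at ξ equals the n-dimensional Fourier transform of f at ξ; that is, ∫_{σ⊥} e^{-i x''·ξ} (∫_σ f(x'+x'') dx') dx'' = f̂(ξ). -/
open MeasureTheory

set_option maxHeartbeats 1000000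

noncomputable def sliceBasis {n : ℕ} (σ : Submodule ℝ (EuclideanSpace ℝ (Fin n))) :
    OrthonormalBasis (Fin (Module.finrank ℝ σ) ⊕ Fin (Module.finrank ℝ ↥σᗮ)) ℝ
      (EuclideanSpace ℝ (Fin n)) := by
  classical
  refine OrthonormalBasis.mk (v := Sum.elim
      (fun i => ((stdOrthonormalBasis ℝ σ) i : EuclideanSpace ℝ (Fin n)))
      (fun j => ((stdOrthonormalBasis ℝ ↥σᗮ) j : EuclideanSpace ℝ (Fin n)))) ?_ ?_
  · constructor
    · rintro (i | j)
      · exact (stdOrthonormalBasis ℝ σ).orthonormal.1 i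
      · exact (stdOrthonormalBasis ℝ ↥σᗮ).orthonormal.1 j
    · rintro (i | j) (i' | j') h
      · exact (stdOrthonormalBasis ℝ σ).orthonormal.2 (fun e => h (congrArg Sum.inl e))
      · exact Submodule.inner_right_of_mem_orthogonal
          ((stdOrthonormalBasis ℝ σ) i).2 ((stdOrthonormalBasis ℝ ↥σᗮ) j').2
      · exact Submodule.inner_left_of_mem_orthogonal
          ((stdOrthonormalBasis ℝ σ) i').2 ((stdOrthonormalBasis ℝ ↥σᗮ) j).2
      · exact (stdOrthonormalBasis ℝ ↥σᗮ).orthonormal.2 (fun e => h (congrArg Sum.inr e))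
  · rw [← Submodule.sup_orthogonal_of_hasOrthogonalProjection (K := σ)]
    refine sup_le ?_ ?_
    · intro x hx
      have h1 : (⟨x, hx⟩ : σ) ∈ Submodule.span ℝ (Set.range ⇑(stdOrthonormalBasis ℝ σ)) := by
        rw [← (stdOrthonormalBasis ℝ σ).coe_toBasis, (stdOrthonormalBasis ℝ σ).toBasis.span_eq]
        trivial
      have h2 := Submodule.apply_mem_span_image_of_mem_span σ.subtype h1
      refine Submodule.span_mono ?_ h2
      rintro _ ⟨_, ⟨i, rfl⟩, rfl⟩
      exact ⟨Sum.inl i, rfl⟩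
    · intro x hx
      have h1 : (⟨x, hx⟩ : σᗮ) ∈ Submodule.span ℝ (Set.range ⇑(stdOrthonormalBasis ℝ ↥σᗮ)) := by
        rw [← (stdOrthonormalBasis ℝ ↥σᗮ).coe_toBasis, (stdOrthonormalBasis ℝ ↥σᗮ).toBasis.span_eq]
        trivial
      have h2 := Submodule.apply_mem_span_image_of_mem_span σᗮ.subtype h1
      refine Submodule.span_mono ?_ h2
      rintro _ ⟨_, ⟨j, rfl⟩, rfl⟩
      exact ⟨Sum.inr j, rfl⟩

lemma sliceBasis_apply_inl {n : ℕ} (σ : Submodule ℝ (EuclideanSpace ℝ (Fin n)))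
    (i : Fin (Module.finrank ℝ σ)) :
    sliceBasis σ (Sum.inl i) = ((stdOrthonormalBasis ℝ σ) i : EuclideanSpace ℝ (Fin n)) := by
  unfold sliceBasis
  exact congrFun (OrthonormalBasis.coe_mk _ _) _

lemma sliceBasis_apply_inr {n : ℕ} (σ : Submodule ℝ (EuclideanSpace ℝ (Fin n)))
    (j : Fin (Module.finrank ℝ ↥σᗮ)) :
    sliceBasis σ (Sum.inr j) = ((stdOrthonormalBasis ℝ ↥σᗮ) j : EuclideanSpace ℝ (Fin n)) := by
  unfold sliceBasis
  exact congrFun (OrthonormalBasis.coe_mk _ _) _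

lemma slice_measurePreserving {n : ℕ} (σ : Submodule ℝ (EuclideanSpace ℝ (Fin n))) :
    MeasurePreserving
      (fun p : σ × σᗮ => (p.1 : EuclideanSpace ℝ (Fin n)) + (p.2 : EuclideanSpace ℝ (Fin n)))
      volume volume := by
  classical
  set d := Module.finrank ℝ σ
  set e := Module.finrank ℝ ↥σᗮ
  set b := stdOrthonormalBasis ℝ σ
  set c := stdOrthonormalBasis ℝ ↥σᗮ
  set B := sliceBasis σ with hB
  have h1 : MeasurePreserving
      (Prod.map (fun x : σ => (MeasurableEquiv.toLp 2 (Fin d → ℝ)).symm (b.repr x))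
        (fun y : σᗮ => (MeasurableEquiv.toLp 2 (Fin e → ℝ)).symm (c.repr y)))
      volume volume :=
    ((EuclideanSpace.volume_preserving_symm_measurableEquiv_toLp (Fin d)).comp
        b.measurePreserving_repr).prod
      ((EuclideanSpace.volume_preserving_symm_measurableEquiv_toLp (Fin e)).comp
        c.measurePreserving_repr)
  have h2 : MeasurePreserving
      (MeasurableEquiv.sumPiEquivProdPi (fun _ : Fin d ⊕ Fin e => ℝ)).symm volume volume :=
    volume_measurePreserving_sumPiEquivProdPi_symm _
  have h3 : MeasurePreserving (MeasurableEquiv.toLp 2 (Fin d ⊕ Fin e → ℝ))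
      volume volume := (EuclideanSpace.volume_preserving_symm_measurableEquiv_toLp _).symm
  have h4 : MeasurePreserving B.repr.symm volume volume := B.measurePreserving_repr_symm
  have hΦ := ((h4.comp h3).comp h2).comp h1
  have hfun : ((⇑B.repr.symm ∘ ⇑(MeasurableEquiv.toLp 2 (Fin d ⊕ Fin e → ℝ))) ∘
        ⇑(MeasurableEquiv.sumPiEquivProdPi fun _ => ℝ).symm) ∘
        Prod.map (fun x : σ => (MeasurableEquiv.toLp 2 (Fin d → ℝ)).symm (b.repr x))
          (fun y : σᗮ => (MeasurableEquiv.toLp 2 (Fin e → ℝ)).symm (c.repr y)) =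
      fun p : σ × σᗮ =>
        (p.1 : EuclideanSpace ℝ (Fin n)) + (p.2 : EuclideanSpace ℝ (Fin n)) := by
    funext p
    simp only [Function.comp_apply, Prod.map_apply]
    rw [← B.sum_repr_symm, Fintype.sum_sum_type]
    simp only [MeasurableEquiv.toLp_apply, MeasurableEquiv.toLp_symm_apply,
      MeasurableEquiv.coe_sumPiEquivProdPi_symm, Equiv.sumPiEquivProdPi_symm_apply,
      WithLp.ofLp_toLp, PiLp.toLp_apply, Prod.map_fst, Prod.map_snd, hB,
      sliceBasis_apply_inl, sliceBasis_apply_inr]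
    simp only [← Submodule.coe_smul, ← AddSubmonoidClass.coe_finset_sum]
    rw [b.sum_repr, c.sum_repr]
  rwa [hfun] at hΦ

/-- **Generalized Fourier slice theorem.** Let `f : ℝⁿ → ℂ` be integrable, `σ` a
`d`-dimensional subspace of `ℝⁿ` and `ξ ∈ σ⊥`. Then the Fourier transform over `σ⊥`
of `x'' ↦ R_d f(σ, x'') = ∫_σ f(x' + x'') dx'` at `ξ` equals the `n`-dimensional Fourier
transform `f̂(ξ) = ∫_{ℝⁿ} e^{-i x·ξ} f(x) dx`. -/
theorem fourier_slice_theorem (n : ℕ) (f : EuclideanSpace ℝ (Fin n) → ℂ)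
    (hf : Integrable f) (σ : Submodule ℝ (EuclideanSpace ℝ (Fin n)))
    (ξ : EuclideanSpace ℝ (Fin n)) (hξ : ξ ∈ σᗮ) :
    (∫ x'' : σᗮ, Complex.exp (-Complex.I * ((inner ℝ (x'' : EuclideanSpace ℝ (Fin n)) ξ : ℝ) : ℂ)) *
        (∫ x' : σ, f ((x' : EuclideanSpace ℝ (Fin n)) + (x'' : EuclideanSpace ℝ (Fin n))))) =
      ∫ x : EuclideanSpace ℝ (Fin n), Complex.exp (-Complex.I * ((inner ℝ x ξ : ℝ) : ℂ)) * f x := by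
  classical
  set g : EuclideanSpace ℝ (Fin n) → ℂ :=
    fun x => Complex.exp (-Complex.I * ((inner ℝ x ξ : ℝ) : ℂ)) * f x with hg
  have hcont : Continuous fun x : EuclideanSpace ℝ (Fin n) =>
      Complex.exp (-Complex.I * ((inner ℝ x ξ : ℝ) : ℂ)) := by
    refine Complex.continuous_exp.comp ?_
    exact continuous_const.mul (Complex.continuous_ofReal.comp
      (continuous_id.inner continuous_const))
  have hgint : Integrable g := by
    refine hf.bdd_mul (c := 1) hcont.aestronglyMeasurable (Filter.Eventually.of_forall fun x => ?_)
    simp [Complex.norm_exp]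
  have hmp := slice_measurePreserving σ
  have hint2 : Integrable (fun p : σ × σᗮ =>
      g ((p.1 : EuclideanSpace ℝ (Fin n)) + (p.2 : EuclideanSpace ℝ (Fin n))))
      (volume.prod volume) :=
    (hmp.integrable_comp hgint.aestronglyMeasurable).mpr hgint
  have hinner : ∀ (x : σ) (y : σᗮ),
      (inner ℝ ((x : EuclideanSpace ℝ (Fin n)) + (y : EuclideanSpace ℝ (Fin n))) ξ : ℝ) =
        (inner ℝ (y : EuclideanSpace ℝ (Fin n)) ξ : ℝ) := by
    intro x y
    rw [inner_add_left, Submodule.inner_right_of_mem_orthogonal x.2 hξ, zero_add]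
  calc (∫ x'' : σᗮ,
          Complex.exp (-Complex.I * ((inner ℝ (x'' : EuclideanSpace ℝ (Fin n)) ξ : ℝ) : ℂ)) *
          (∫ x' : σ, f ((x' : EuclideanSpace ℝ (Fin n)) + (x'' : EuclideanSpace ℝ (Fin n)))))
      = ∫ y : σᗮ, ∫ x : σ,
          g ((x : EuclideanSpace ℝ (Fin n)) + (y : EuclideanSpace ℝ (Fin n))) := by
        refine integral_congr_ae (Filter.Eventually.of_forall fun y => ?_)
        dsimp only
        rw [← integral_const_mul]
        refine integral_congr_ae (Filter.Eventually.of_forall fun x => ?_)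
        rw [hg]
        simp only [hinner x y]
    _ = ∫ p : σ × σᗮ,
          g ((p.1 : EuclideanSpace ℝ (Fin n)) + (p.2 : EuclideanSpace ℝ (Fin n)))
          ∂(volume.prod volume) := (integral_prod_symm _ hint2).symm
    _ = ∫ x, g x ∂(Measure.map (fun p : σ × σᗮ =>
          (p.1 : EuclideanSpace ℝ (Fin n)) + (p.2 : EuclideanSpace ℝ (Fin n))) volume) :=
        (integral_map hmp.aemeasurable (hmp.map_eq ▸ hgint.aestronglyMeasurable)).symm
    _ = ∫ x, g x := by rw [hmp.map_eq]
end

section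
/- Let n ≥ 2, 1 ≤ d ≤ n-1, and let Σ ⊂ ℝⁿ be a smooth compact hypersurface. The set S = {(σ, x'') ∈ G(d,n) : σ ⊂ T_yΣ and x'' = y - π_σ y for some y ∈ Σ} is the image under the projection of the composition Λ'∘N*Σ of the conormal bundle of Σ with the canonical relation Λ' = {(σ, y - π_σ y, y; η(y·ω₁,…,y·ω_d,1,1)) : σ = span_{ON}(ω₁,…,ω_d), (y,η) ∈ T*ℝⁿ\0, σ ⊂ η⊥}; moreover the composed set Λ'∘N*Σ = {(σ, y-π_σy; η(y·ω₁,…,y·ω_d,1)) : y ∈ Σ, η ∈ N*_yΣ\{0}, σ ⊂ T_yΣ} projects onto S and at each point its fiber is one-dimensional. -/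
open Set

noncomputable section

lemma orth_finrank_one (n : ℕ) (K : Submodule ℝ (EuclideanSpace ℝ (Fin n)))
    (hn : 2 ≤ n) (hK : Module.finrank ℝ ↥K = n - 1) : Module.finrank ℝ ↥Kᗮ = 1 := by
  have h := Submodule.finrank_add_finrank_orthogonal (K := K)
  rw [hK, finrank_euclideanSpace_fin] at h
  omega

lemma orth_eq_span (n : ℕ) (K : Submodule ℝ (EuclideanSpace ℝ (Fin n)))
    (h1 : Module.finrank ℝ ↥Kᗮ = 1) (η : EuclideanSpace ℝ (Fin n))
    (hη : η ∈ Kᗮ) (hne : η ≠ 0) : Kᗮ = Submodule.span ℝ {η} := by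
  symm
  apply Submodule.eq_of_le_of_finrank_eq
  · rwa [Submodule.span_singleton_le_iff_mem]
  · rw [finrank_span_singleton hne, h1]

lemma mem_of_inner_eq_zero (n : ℕ) (K : Submodule ℝ (EuclideanSpace ℝ (Fin n)))
    (h1 : Module.finrank ℝ ↥Kᗮ = 1) (η : EuclideanSpace ℝ (Fin n))
    (hη : η ∈ Kᗮ) (hne : η ≠ 0) (w : EuclideanSpace ℝ (Fin n))
    (hw : (inner ℝ η w : ℝ) = 0) : w ∈ K := by
  have hspan := orth_eq_span n K h1 η hη hne
  rw [← Submodule.orthogonal_orthogonal K, hspan]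
  intro u hu
  obtain ⟨c, rfl⟩ := Submodule.mem_span_singleton.mp hu
  rw [inner_smul_left]
  simp [hw]

lemma exists_normal (n : ℕ) (K : Submodule ℝ (EuclideanSpace ℝ (Fin n)))
    (h1 : Module.finrank ℝ ↥Kᗮ = 1) : ∃ η ∈ Kᗮ, η ≠ (0 : EuclideanSpace ℝ (Fin n)) := by
  have : Kᗮ ≠ ⊥ := by
    intro h
    rw [h] at h1
    simp at h1
  exact Submodule.exists_mem_ne_zero_of_ne_bot this


variable (n d : ℕ)

/-- Points of `T*G(d,n)`: a `d`-plane `(σ, x'')` together with a covector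
`(η₁,…,η_d, ξ) ∈ (σ⊥)^{d+1}` (see Lemma on the expression of `T*G(d,n)`). -/
abbrev CotangentG (n d : ℕ) :=
  Submodule ℝ (EuclideanSpace ℝ (Fin n)) × EuclideanSpace ℝ (Fin n) ×
    (Fin d → EuclideanSpace ℝ (Fin n)) × EuclideanSpace ℝ (Fin n)

/-- The canonical relation `Λ'` of the `d`-plane transform:
`Λ' = {(σ, y - π_σ y, y; η(y·ω₁,…,y·ω_d,1,1)) : σ = span_ON(ω₁,…,ω_d), (y,η) ∈ T*ℝⁿ\0, σ ⊂ η⊥}`,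
where the covector `η(t₁,…,t_d,1)` at `(σ, x'')` is `((t₁η,…,t_dη), η)`. -/
def canonicalRelation (n d : ℕ) :
    Set (CotangentG n d × (EuclideanSpace ℝ (Fin n) × EuclideanSpace ℝ (Fin n))) :=
  {q | ∃ ω : Fin d → EuclideanSpace ℝ (Fin n), Orthonormal ℝ ω ∧
    q.2.2 ≠ 0 ∧ (∀ j, (inner ℝ q.2.2 (ω j) : ℝ) = 0) ∧
    q.1.1 = Submodule.span ℝ (Set.range ω) ∧
    q.1.2.1 = q.2.1 - ∑ j, (inner ℝ q.2.1 (ω j) : ℝ) • ω j ∧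
    q.1.2.2.1 = (fun j => (inner ℝ q.2.1 (ω j) : ℝ) • q.2.2) ∧
    q.1.2.2.2 = q.2.2}

/-- The conormal bundle `N*Σ = {(y,η) : y ∈ Σ, η ⊥ T_yΣ}` of a hypersurface `Σ` with
tangent spaces `T y`. -/
def conormalBundle (Sig : Set (EuclideanSpace ℝ (Fin n)))
    (T : EuclideanSpace ℝ (Fin n) → Submodule ℝ (EuclideanSpace ℝ (Fin n))) :
    Set (EuclideanSpace ℝ (Fin n) × EuclideanSpace ℝ (Fin n)) :=
  {p | p.1 ∈ Sig ∧ p.2 ∈ (T p.1)ᗮ}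

/-- The composition `Λ'∘N*Σ` (with the zero section removed on the `T*ℝⁿ` side). -/
def composedSet (Sig : Set (EuclideanSpace ℝ (Fin n)))
    (T : EuclideanSpace ℝ (Fin n) → Submodule ℝ (EuclideanSpace ℝ (Fin n))) :
    Set (CotangentG n d) :=
  {q | ∃ z ∈ conormalBundle n Sig T, z.2 ≠ 0 ∧ (q, z) ∈ canonicalRelation n d}

/-- The surface
`S = {(σ, x'') ∈ G(d,n) : σ ⊂ T_yΣ, x'' = y - π_σ y for some y ∈ Σ}` in `G(d,n)`. -/
def surfaceS (Sig : Set (EuclideanSpace ℝ (Fin n)))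
    (T : EuclideanSpace ℝ (Fin n) → Submodule ℝ (EuclideanSpace ℝ (Fin n))) :
    Set (Submodule ℝ (EuclideanSpace ℝ (Fin n)) × EuclideanSpace ℝ (Fin n)) :=
  {p | ∃ y ∈ Sig, ∃ ω : Fin d → EuclideanSpace ℝ (Fin n), Orthonormal ℝ ω ∧
    (∀ j, ω j ∈ T y) ∧ p.1 = Submodule.span ℝ (Set.range ω) ∧
    p.2 = y - ∑ j, (inner ℝ y (ω j) : ℝ) • ω j}

/-- For a smooth compact hypersurface `Σ ⊂ ℝⁿ` (given by a set `Σ` together with its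
tangent hyperplanes `T y`, `dim T y = n - 1`), the composed set
`Λ'∘N*Σ = {(σ, y - π_σ y; η(y·ω₁,…,y·ω_d,1)) : y ∈ Σ, η ∈ N*_yΣ\{0}, σ ⊂ T_yΣ}`
projects onto the set `S = {(σ, x'') : σ ⊂ T_yΣ, x'' = y - π_σ y for some y ∈ Σ}`,
and at each point of `S` the fiber of the projection is one-dimensional (it is
contained in a line through the origin of the covector space, punctured at `0`). -/
theorem composedSet_eq_and_proj (hn : 2 ≤ n) (hd1 : 1 ≤ d) (hdn : d ≤ n - 1)
    (Sig : Set (EuclideanSpace ℝ (Fin n)))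
    (T : EuclideanSpace ℝ (Fin n) → Submodule ℝ (EuclideanSpace ℝ (Fin n)))
    (hT : ∀ y ∈ Sig, Module.finrank ℝ ↥(T y) = n - 1) :
    -- the composed set has the asserted explicit form
    composedSet n d Sig T =
      {q : CotangentG n d | ∃ y ∈ Sig, ∃ η, η ∈ (T y)ᗮ ∧ η ≠ (0 : EuclideanSpace ℝ (Fin n)) ∧
        ∃ ω : Fin d → EuclideanSpace ℝ (Fin n), Orthonormal ℝ ω ∧ (∀ j, ω j ∈ T y) ∧
          q.1 = Submodule.span ℝ (Set.range ω) ∧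
          q.2.1 = y - ∑ j, (inner ℝ y (ω j) : ℝ) • ω j ∧
          q.2.2.1 = (fun j => (inner ℝ y (ω j) : ℝ) • η) ∧ q.2.2.2 = η} ∧
    -- it projects onto S
    (fun q : CotangentG n d => (q.1, q.2.1)) '' composedSet n d Sig T = surfaceS n d Sig T ∧
    -- and each fiber is one-dimensional
    (∀ p ∈ surfaceS n d Sig T, ∀ y ∈ Sig, ∀ ω : Fin d → EuclideanSpace ℝ (Fin n),
      Orthonormal ℝ ω → (∀ j, ω j ∈ T y) → p.1 = Submodule.span ℝ (Set.range ω) →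
      p.2 = y - ∑ j, (inner ℝ y (ω j) : ℝ) • ω j →
      ∃ v : (Fin d → EuclideanSpace ℝ (Fin n)) × EuclideanSpace ℝ (Fin n), v ≠ 0 ∧
        ∀ η ∈ (T y)ᗮ, η ≠ (0 : EuclideanSpace ℝ (Fin n)) →
          ∃ t : ℝ, ((fun j => (inner ℝ y (ω j) : ℝ) • η), η) = t • v) := by

  have hfib : ∀ y ∈ Sig, Module.finrank ℝ ↥(T y)ᗮ = 1 := fun y hy =>
    orth_finrank_one n (T y) hn (hT y hy)
  have h1 : composedSet n d Sig T =
      {q : CotangentG n d | ∃ y ∈ Sig, ∃ η, η ∈ (T y)ᗮ ∧ η ≠ (0 : EuclideanSpace ℝ (Fin n)) ∧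
        ∃ ω : Fin d → EuclideanSpace ℝ (Fin n), Orthonormal ℝ ω ∧ (∀ j, ω j ∈ T y) ∧
          q.1 = Submodule.span ℝ (Set.range ω) ∧
          q.2.1 = y - ∑ j, (inner ℝ y (ω j) : ℝ) • ω j ∧
          q.2.2.1 = (fun j => (inner ℝ y (ω j) : ℝ) • η) ∧ q.2.2.2 = η} := by
    ext q
    constructor
    · rintro ⟨⟨y, η⟩, ⟨hy, hηT⟩, hηne, ω, hON, -, hperp, hσ, hx, hc1, hc2⟩
      exact ⟨y, hy, η, hηT, hηne, ω, hON,
        fun j => mem_of_inner_eq_zero n (T y) (hfib y hy) η hηT hηne (ω j) (hperp j),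
        hσ, hx, hc1, hc2⟩
    · rintro ⟨y, hy, η, hηT, hηne, ω, hON, hωT, hσ, hx, hc1, hc2⟩
      refine ⟨(y, η), ⟨hy, hηT⟩, hηne, ω, hON, hηne, fun j => ?_, hσ, hx, hc1, hc2⟩
      rw [real_inner_comm]
      exact hηT (ω j) (hωT j)
  refine ⟨h1, ?_, ?_⟩
  · ext p
    constructor
    · rintro ⟨q, hq, rfl⟩
      rw [h1] at hq
      obtain ⟨y, hy, η, hηT, hηne, ω, hON, hωT, hσ, hx, -, -⟩ := hq
      exact ⟨y, hy, ω, hON, hωT, hσ, hx⟩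
    · rintro ⟨y, hy, ω, hON, hωT, hσ, hx⟩
      obtain ⟨η₀, hη₀T, hη₀ne⟩ := exists_normal n (T y) (hfib y hy)
      refine ⟨(p.1, p.2, (fun j => (inner ℝ y (ω j) : ℝ) • η₀), η₀), ?_, rfl⟩
      rw [h1]
      exact ⟨y, hy, η₀, hη₀T, hη₀ne, ω, hON, hωT, hσ, hx, rfl, rfl⟩
  · intro p hp y hy ω hON hωT hσ hx
    obtain ⟨η₀, hη₀T, hη₀ne⟩ := exists_normal n (T y) (hfib y hy)
    refine ⟨((fun j => (inner ℝ y (ω j) : ℝ) • η₀), η₀), ?_, ?_⟩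
    · intro h
      exact hη₀ne (congrArg Prod.snd h)
    · intro η hηT hηne
      have hspan := orth_eq_span n (T y) (hfib y hy) η₀ hη₀T hη₀ne
      have : η ∈ Submodule.span ℝ {η₀} := hspan ▸ hηT
      obtain ⟨c, rfl⟩ := Submodule.mem_span_singleton.mp this
      refine ⟨c, ?_⟩
      refine Prod.ext ?_ rfl
      funext j
      simp [Prod.smul_fst, smul_comm c]
end
end
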